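/- arXiv:2511.16503 — 3 statements merged into one kernel-verified Lean document; each statement's English description precedes it below -/
import Mathlib

section
/- Let (X,d) be a T₁ quasi-metric space (with forward topology normal). Then (X,d) is a UC space if and only if every sequence (x_n) in X with I⁺(x_n)→0 has a cluster point in (X,d), where I⁺(x)=d(x, X∖{x}) is the isolation functional. -/
open Filter Topology Set

structure IsQuasiMetric {X : Type*} (d : X → X → ℝ) : Prop where
  nonneg : ∀ x y, 0 ≤ d x y
  refl : ∀ x, d x x = 0
  eq_of_both_zero : ∀ x y, d x y = 0 → d y x = 0 → x = y
  triangle : ∀ x y z, d x y ≤ d x z + d z y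

/-- The forward topology generated by forward balls `B⁺(x,ε) = {y | d x y < ε}`. -/
def forwardTopology {X : Type*} (d : X → X → ℝ) : TopologicalSpace X :=
  TopologicalSpace.generateFrom {S | ∃ x : X, ∃ ε : ℝ, 0 < ε ∧ S = {y | d x y < ε}}

/-- `s` forward converges to `x`: `d x (s n) → 0`. -/
def ForwardConv {X : Type*} (d : X → X → ℝ) (s : ℕ → X) (x : X) : Prop :=
  ∀ ε > (0:ℝ), ∃ N : ℕ, ∀ n ≥ N, d x (s n) < ε

/-- `s` backward converges to `x`: `d (s n) x → 0`. -/
def BackwardConv {X : Type*} (d : X → X → ℝ) (s : ℕ → X) (x : X) : Prop :=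
  ∀ ε > (0:ℝ), ∃ N : ℕ, ∀ n ≥ N, d (s n) x < ε

/-- `x` is a cluster point of `s`: some subsequence forward converges to `x`. -/
def IsClusterPointOf {X : Type*} (d : X → X → ℝ) (s : ℕ → X) (x : X) : Prop :=
  ∃ φ : ℕ → ℕ, StrictMono φ ∧ ForwardConv d (s ∘ φ) x

def LeftKCauchy {X : Type*} (d : X → X → ℝ) (s : ℕ → X) : Prop :=
  ∀ ε > (0:ℝ), ∃ n₀ : ℕ, ∀ k n : ℕ, n₀ ≤ k → k ≤ n → d (s k) (s n) < ε

/-- `s` is forward parallel to `t`. -/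
def ForwardParallel {X : Type*} (d : X → X → ℝ) (s t : ℕ → X) : Prop :=
  ∀ ε > (0:ℝ), ∃ N : ℕ, ∀ n ≥ N, d (s n) (t n) < ε

/-- Forward continuity for real-valued functions (ε-δ form). -/
def ForwardContinuous {X : Type*} (d : X → X → ℝ) (f : X → ℝ) : Prop :=
  ∀ x₀ : X, ∀ ε > (0:ℝ), ∃ δ > (0:ℝ), ∀ y, d x₀ y < δ → |f x₀ - f y| < ε

/-- Uniform continuity for real-valued functions. -/
def UniformlyCont {X : Type*} (d : X → X → ℝ) (f : X → ℝ) : Prop :=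
  ∀ ε > (0:ℝ), ∃ δ > (0:ℝ), ∀ x y, d x y < δ → |f x - f y| < ε

/-- `(X,d)` is a UC quasi-metric space. -/
def IsUC {X : Type*} (d : X → X → ℝ) : Prop :=
  ∀ f : X → ℝ, ForwardContinuous d f → UniformlyCont d f

/-- Distance between two sets: `inf {d a b | a ∈ A, b ∈ B}`. -/
noncomputable def setDist {X : Type*} (d : X → X → ℝ) (A B : Set X) : ℝ :=
  sInf {r : ℝ | ∃ a ∈ A, ∃ b ∈ B, d a b = r}

/-- The isolation functional `I⁺(x) = d(x, X \ {x})`. -/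
noncomputable def isolation {X : Type*} (d : X → X → ℝ) (x : X) : ℝ :=
  sInf {r : ℝ | ∃ y : X, y ≠ x ∧ d x y = r}

/-!
A forward continuous function that is not uniformly continuous produces pairs `a n ≠ b n` with
`d (a n) (b n) → 0` and `|f (a n) - f (b n)| ≥ ε`; then `I⁺(a n) → 0`, and a cluster point of
`(a n)` would be a point of discontinuity of `f`.

Conversely, let `I⁺(s n) → 0` with `(s n)` without cluster points, and pick `u n ≠ s n` with
`d (s n) (u n) → 0`. By T₁, every subset of the range of a sequence without cluster points is
closed, and normality (Urysohn) with uniform continuity forbids a forward parallel pair of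
sequences running in two disjoint closed sets. If `u` clusters at `z`, take the closed sets `range s \ {z}` and `{z}`;
otherwise pass to a subsequence along which the ranges of `s` and `u` are disjoint.
-/

section

variable {X : Type*} {d : X → X → ℝ}

lemma isOpen_forwardBall (x : X) {ε : ℝ} (hε : 0 < ε) :
    IsOpen[forwardTopology d] {y | d x y < ε} :=
  TopologicalSpace.isOpen_generateFrom_of_mem ⟨x, ε, hε, rfl⟩

lemma exists_forwardBall_subset (hd : IsQuasiMetric d) {U : Set X}
    (hU : IsOpen[forwardTopology d] U) {x : X} (hx : x ∈ U) :
    ∃ δ > 0, {y | d x y < δ} ⊆ U := by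
  induction hU generalizing x with
  | basic S hS =>
    obtain ⟨c, ε, -, rfl⟩ := hS
    refine ⟨ε - d c x, sub_pos.2 hx, fun y (hy : d x y < ε - d c x) => ?_⟩
    show d c y < ε
    linarith [hd.triangle c y x]
  | univ => exact ⟨1, one_pos, subset_univ _⟩
  | inter U V _ _ ihU ihV =>
    obtain ⟨δ₁, hδ₁, h₁⟩ := ihU hx.1
    obtain ⟨δ₂, hδ₂, h₂⟩ := ihV hx.2
    exact ⟨min δ₁ δ₂, lt_min hδ₁ hδ₂, fun y (hy : d x y < min δ₁ δ₂) =>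
      ⟨h₁ (hy.trans_le (min_le_left _ _)), h₂ (hy.trans_le (min_le_right _ _))⟩⟩
  | sUnion 𝒮 _ ih =>
    obtain ⟨V, hV, hxV⟩ := hx
    obtain ⟨δ, hδ, h⟩ := ih V hV hxV
    exact ⟨δ, hδ, h.trans (subset_sUnion_of_mem hV)⟩

lemma forwardContinuous_of_continuous (hd : IsQuasiMetric d) {f : X → ℝ}
    (hf : Continuous[forwardTopology d, _] f) : ForwardContinuous d f := by
  let := forwardTopology d
  intro x ε hε
  obtain ⟨δ, hδ, hball⟩ := exists_forwardBall_subset hd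
    (hf.isOpen_preimage _ Metric.isOpen_ball) (Metric.mem_ball_self (x := f x) hε)
  exact ⟨δ, hδ, fun y hy => by simpa [Real.dist_eq, abs_sub_comm] using hball hy⟩

lemma ForwardConv.tendsto (hd : IsQuasiMetric d) {s : ℕ → X} {x : X} (h : ForwardConv d s x) :
    Tendsto s atTop (@nhds X (forwardTopology d) x) := by
  let := forwardTopology d
  rw [(nhds_basis_opens x).tendsto_right_iff]
  rintro U ⟨hxU, hU⟩
  obtain ⟨δ, hδ, hball⟩ := exists_forwardBall_subset hd hU hxU
  obtain ⟨N, hN⟩ := h δ hδ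
  exact eventually_atTop.2 ⟨N, fun n hn => hball (hN n hn)⟩

lemma ForwardConv.of_forwardParallel (hd : IsQuasiMetric d) {a b : ℕ → X} {x : X}
    (ha : ForwardConv d a x) (hab : ForwardParallel d a b) : ForwardConv d b x := by
  intro ε hε
  obtain ⟨N₁, hN₁⟩ := ha (ε / 2) (half_pos hε)
  obtain ⟨N₂, hN₂⟩ := hab (ε / 2) (half_pos hε)
  refine ⟨max N₁ N₂, fun n hn => ?_⟩
  linarith [hd.triangle x (b n) (a n), hN₁ n (le_of_max_le_left hn), hN₂ n (le_of_max_le_right hn)]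

lemma ForwardParallel.comp_strictMono {a b : ℕ → X} (h : ForwardParallel d a b) {φ : ℕ → ℕ}
    (hφ : StrictMono φ) : ForwardParallel d (a ∘ φ) (b ∘ φ) := by
  intro ε hε
  obtain ⟨N, hN⟩ := h ε hε
  exact ⟨N, fun n hn => hN (φ n) (hn.trans hφ.le_apply)⟩

lemma forwardParallel_of_lt_one_div {a b : ℕ → X} (h : ∀ n : ℕ, d (a n) (b n) < 1 / (n + 1)) :
    ForwardParallel d a b := by
  intro ε hε
  obtain ⟨N, hN⟩ := exists_nat_one_div_lt hε
  exact ⟨N, fun n hn => (h n).trans_le ((Nat.one_div_le_one_div hn).trans hN.le)⟩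

lemma isClusterPointOf_iff_frequently {s : ℕ → X} {x : X} :
    IsClusterPointOf d s x ↔ ∀ ε > 0, ∃ᶠ n in atTop, d x (s n) < ε := by
  constructor
  · rintro ⟨φ, hφ, hconv⟩ ε hε
    obtain ⟨K, hK⟩ := hconv ε hε
    exact frequently_atTop.2 fun N =>
      ⟨φ (max N K), (le_max_left N K).trans hφ.le_apply, hK _ (le_max_right N K)⟩
  · intro h
    obtain ⟨φ, hφ, hlt⟩ := extraction_forall_of_frequently fun k : ℕ =>
      h (1 / (k + 1)) Nat.one_div_pos_of_nat
    exact ⟨φ, hφ, forwardParallel_of_lt_one_div (a := fun _ => x) hlt⟩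

lemma eventually_ne_of_forall_not_isClusterPointOf (hd : IsQuasiMetric d) {s : ℕ → X}
    (hs : ∀ x, ¬ IsClusterPointOf d s x) (x : X) : ∀ᶠ n in atTop, s n ≠ x := by
  by_contra h
  refine hs x (isClusterPointOf_iff_frequently.2 fun ε hε => (not_eventually.1 h).mono ?_)
  intro n hn
  rwa [not_not.1 hn, hd.refl]

lemma isClosed_of_subset_range (hd : IsQuasiMetric d) (hT1 : @T1Space X (forwardTopology d))
    {s : ℕ → X} (hs : ∀ x, ¬ IsClusterPointOf d s x) {S : Set X} (hS : S ⊆ range s) :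
    IsClosed[forwardTopology d] S := by
  let := forwardTopology d
  rw [← isOpen_compl_iff, isOpen_iff_forall_mem_open]
  intro z hz
  obtain ⟨ε, hε, hfar⟩ : ∃ ε > 0, ∀ᶠ n in atTop, ε ≤ d z (s n) := by
    simpa [isClusterPointOf_iff_frequently, not_frequently] using hs z
  obtain ⟨N, hN⟩ := eventually_atTop.1 hfar
  -- only the finitely many terms before `N` can come close to `z`; T₁ makes them a closed set
  refine ⟨{y | d z y < ε} \ (S ∩ s '' Iio N), ?_, ?_, ?_⟩
  · rintro y ⟨hy, hyF⟩ hyS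
    obtain ⟨n, rfl⟩ := hS hyS
    rcases lt_or_ge n N with hn | hn
    · exact hyF ⟨hyS, n, hn, rfl⟩
    · exact (hN n hn).not_gt hy
  · exact (isOpen_forwardBall z hε).sdiff
      (((finite_Iio N).image s).subset inter_subset_right).isClosed
  · exact ⟨by simpa [hd.refl] using hε, fun h => hz h.1⟩

lemma IsUC.not_forwardParallel (hUC : IsUC d) (hd : IsQuasiMetric d)
    (hN : @NormalSpace X (forwardTopology d)) {C D : Set X} (hC : IsClosed[forwardTopology d] C)
    (hD : IsClosed[forwardTopology d] D) (hCD : Disjoint C D) {a b : ℕ → X}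
    (ha : ∀ᶠ n in atTop, a n ∈ C) (hb : Tendsto b atTop (@nhdsSet X (forwardTopology d) D)) :
    ¬ ForwardParallel d a b := by
  let := forwardTopology d
  intro hab
  obtain ⟨f, hfC, hfD, -⟩ := exists_continuous_zero_one_of_isClosed hC hD hCD
  obtain ⟨δ, hδ, hf⟩ := hUC f (forwardContinuous_of_continuous hd f.continuous) (1 / 2) one_half_pos
  have hbD : ∀ᶠ n in atTop, b n ∈ f ⁻¹' Ioi (1 / 2) :=
    hb ((isOpen_Ioi.preimage f.continuous).mem_nhdsSet.2 fun y hy => by norm_num [hfD hy])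
  obtain ⟨N, hN⟩ := eventually_atTop.1 (ha.and (hbD.and (eventually_atTop.2 (hab δ hδ))))
  obtain ⟨haN, hbN, habN⟩ := hN N le_rfl
  have := hf _ _ habN
  rw [hfC haN, Pi.zero_apply, zero_sub, abs_neg] at this
  exact (lt_abs.2 (Or.inl hbN)).not_gt this

lemma IsUC.not_isClusterPointOf_of_forwardParallel (hUC : IsUC d) (hd : IsQuasiMetric d)
    (hT1 : @T1Space X (forwardTopology d)) (hN : @NormalSpace X (forwardTopology d))
    {s u : ℕ → X} (hs : ∀ x, ¬ IsClusterPointOf d s x) (hsu : ForwardParallel d s u) (z : X) :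
    ¬ IsClusterPointOf d u z := by
  let := forwardTopology d
  rintro ⟨ψ, hψ, hconv⟩
  refine hUC.not_forwardParallel hd hN (isClosed_of_subset_range hd hT1 hs sdiff_subset)
    isClosed_singleton (disjoint_sdiff_left (s := {z})) ?_ ?_ (hsu.comp_strictMono hψ)
  · exact (hψ.tendsto_atTop.eventually (eventually_ne_of_forall_not_isClusterPointOf hd hs z)).mono
      fun n hn => ⟨mem_range_self _, hn⟩
  · rw [nhdsSet_singleton]
    exact hconv.tendsto hd

lemma IsUC.exists_eq_of_forwardParallel (hUC : IsUC d) (hd : IsQuasiMetric d)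
    (hT1 : @T1Space X (forwardTopology d)) (hN : @NormalSpace X (forwardTopology d))
    {s u : ℕ → X} (hs : ∀ x, ¬ IsClusterPointOf d s x) (hu : ∀ x, ¬ IsClusterPointOf d u x)
    (hsu : ForwardParallel d s u) : ∃ n, s n = u n := by
  let := forwardTopology d
  by_contra! hne
  have hfar : ∀ m, ∀ᶠ n in atTop, s m ≠ u n ∧ u m ≠ s n := fun m =>
    ((eventually_ne_of_forall_not_isClusterPointOf hd hu (s m)).mono fun _ h => h.symm).and
      ((eventually_ne_of_forall_not_isClusterPointOf hd hs (u m)).mono fun _ h => h.symm)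
  obtain ⟨φ, hφ, hrel, -⟩ := (hasAntitoneBasis_atTop (α := ℕ)).subbasis_with_rel hfar
  have hdisj : Disjoint (range (s ∘ φ)) (range (u ∘ φ)) := by
    rw [disjoint_left]
    rintro _ ⟨j, rfl⟩ ⟨k, hk⟩
    rcases lt_trichotomy j k with hjk | rfl | hkj
    · exact (hrel hjk).1 hk.symm
    · exact hne _ hk.symm
    · exact (hrel hkj).2 hk
  exact hUC.not_forwardParallel hd hN
    (isClosed_of_subset_range hd hT1 hs (range_comp_subset_range φ s))
    (isClosed_of_subset_range hd hT1 hu (range_comp_subset_range φ u)) hdisj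
    (Eventually.of_forall mem_range_self)
    ((tendsto_principal.2 (Eventually.of_forall mem_range_self)).mono_right principal_le_nhdsSet)
    (hsu.comp_strictMono hφ)

lemma isolation_le (hd : IsQuasiMetric d) {x y : X} (hxy : y ≠ x) : isolation d x ≤ d x y :=
  csInf_le ⟨0, by rintro _ ⟨z, -, rfl⟩; exact hd.nonneg x z⟩ ⟨y, hxy, rfl⟩

lemma exists_ne_lt_of_isolation_lt [Nontrivial X] {x : X} {ε : ℝ} (h : isolation d x < ε) :
    ∃ y ≠ x, d x y < ε := by
  obtain ⟨y, hy⟩ := exists_ne x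
  obtain ⟨_, ⟨z, hz, rfl⟩, hlt⟩ := exists_lt_of_csInf_lt
    (s := {r | ∃ y, y ≠ x ∧ d x y = r}) ⟨_, y, hy, rfl⟩ h
  exact ⟨z, hz, hlt⟩

lemma exists_ne_forwardParallel_of_isolation [Nontrivial X] {s : ℕ → X}
    (hs : ∀ ε > (0:ℝ), ∃ N : ℕ, ∀ n ≥ N, isolation d (s n) < ε) :
    ∃ u : ℕ → X, (∀ n, u n ≠ s n) ∧ ForwardParallel d s u := by
  choose u hne hu using fun n : ℕ =>
    exists_ne_lt_of_isolation_lt (lt_add_of_pos_right (isolation d (s n))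
      (Nat.one_div_pos_of_nat (α := ℝ) (n := n)))
  refine ⟨u, hne, fun ε hε => ?_⟩
  obtain ⟨N, hN⟩ := hs (ε / 2) (half_pos hε)
  obtain ⟨K, hK⟩ := exists_nat_one_div_lt (half_pos hε)
  refine ⟨max N K, fun n hn => ?_⟩
  have : 1 / ((n : ℝ) + 1) ≤ 1 / (K + 1) := Nat.one_div_le_one_div (le_of_max_le_right hn)
  linarith [hu n, hN n (le_of_max_le_left hn)]

lemma isUC_of_isolation (hd : IsQuasiMetric d)
    (h : ∀ s : ℕ → X, (∀ ε > (0:ℝ), ∃ N : ℕ, ∀ n ≥ N, isolation d (s n) < ε) →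
      ∃ x : X, IsClusterPointOf d s x) :
    IsUC d := by
  intro f hf ε hε
  by_contra! hno
  choose a b hab hfab using fun n : ℕ => hno (1 / (n + 1)) Nat.one_div_pos_of_nat
  have hpar : ForwardParallel d a b := forwardParallel_of_lt_one_div hab
  have hiso : ∀ η > (0:ℝ), ∃ N : ℕ, ∀ n ≥ N, isolation d (a n) < η := by
    intro η hη
    obtain ⟨N, hN⟩ := hpar η hη
    refine ⟨N, fun n hn => (isolation_le hd fun hba => ?_).trans_lt (hN n hn)⟩
    have := hfab n
    rw [hba, sub_self, abs_zero] at this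
    linarith
  obtain ⟨x, φ, hφ, hconv⟩ := h a hiso
  obtain ⟨δ, hδ, hfx⟩ := hf x (ε / 2) (half_pos hε)
  have hconv' := hconv.of_forwardParallel hd (hpar.comp_strictMono hφ)
  obtain ⟨N₁, hN₁⟩ := hconv δ hδ
  obtain ⟨N₂, hN₂⟩ := hconv' δ hδ
  set n := φ (max N₁ N₂)
  have ha := hfx (a n) (hN₁ _ (le_max_left _ _))
  have hb := hfx (b n) (hN₂ _ (le_max_right _ _))
  have := abs_sub_le (f (a n)) (f x) (f (b n))
  rw [abs_sub_comm (f (a n)) (f x)] at this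
  linarith [hfab n]

end

/-- `(X,d)` is UC iff every sequence whose isolation degrees tend to `0`
has a cluster point. -/
theorem isUC_iff_isolation {X : Type*} (d : X → X → ℝ) (hd : IsQuasiMetric d)
    (hT1 : @T1Space X (forwardTopology d))
    (hN : @NormalSpace X (forwardTopology d)) :
    IsUC d ↔
      ∀ s : ℕ → X, (∀ ε > (0:ℝ), ∃ N : ℕ, ∀ n ≥ N, isolation d (s n) < ε) →
        ∃ x : X, IsClusterPointOf d s x := by
  refine ⟨fun hUC s hs => ?_, isUC_of_isolation hd⟩
  by_contra! hs_far
  have : Nontrivial X := by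
    obtain ⟨n, hn⟩ := (eventually_ne_of_forall_not_isClusterPointOf hd hs_far (s 0)).exists
    exact ⟨⟨s n, s 0, hn⟩⟩
  obtain ⟨u, hne, hsu⟩ := exists_ne_forwardParallel_of_isolation hs
  obtain ⟨n, hn⟩ := hUC.exists_eq_of_forwardParallel hd hT1 hN hs_far
    (hUC.not_isClusterPointOf_of_forwardParallel hd hT1 hN hs_far hsu) hsu
  exact hne n hn.symm
end

section
/- Let (X,d) be a T₁ quasi-metric space whose forward topology is normal. If (X,d) is a UC space, then every open cover of (X,d) has a Lebesgue number: there exists δ>0 such that for each x∈X, B⁺(x,δ) is contained in some member of the cover. -/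
open Filter Topology Set

/-! A failure of the Lebesgue property yields points `xₙ`, `yₙ` with `d xₙ yₙ → 0` such that
`yₙ` leaves a cover member containing `xₙ`; the `xₙ` then have no forward cluster point.
By Urysohn's lemma some continuous `f` keeps `f xₙ` and `f yₙ` apart infinitely often:
separate a cluster point of `(yₙ)` from a tail of `(xₙ)`, or, if there is none, separate the
(closed, discrete) ranges of suitable subsequences of `(xₙ)` and `(yₙ)`. Such an `f` is
forward continuous but not uniformly continuous. -/

section ClusterPoints

variable {X : Type*} [TopologicalSpace X]

theorem locallyFinite_singleton_iff_forall_not_mapClusterPt {x : ℕ → X} :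
    LocallyFinite (fun n => ({x n} : Set X)) ↔ ∀ p, ¬MapClusterPt p atTop x := by
  simp only [LocallyFinite, mapClusterPt_iff_frequently, not_forall, not_frequently,
    ← Nat.cofinite_eq_atTop, eventually_cofinite, singleton_inter_nonempty, not_not, exists_prop]

theorem exists_continuous_frequently_le_abs_sub_of_mapClusterPt [T1Space X] [NormalSpace X]
    {x y : ℕ → X} {p : X} (hx : ¬MapClusterPt p atTop x) (hy : MapClusterPt p atTop y) :
    ∃ f : X → ℝ, Continuous f ∧ ∃ᶠ n in atTop, 1 / 2 ≤ |f (x n) - f (y n)| := by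
  obtain ⟨s, hs, hxs⟩ : ∃ s ∈ 𝓝 p, ∀ᶠ n in atTop, x n ∉ s := by
    simpa [mapClusterPt_iff_frequently, not_frequently] using hx
  obtain ⟨V, hVs, hV, hpV⟩ := mem_nhds_iff.1 hs
  obtain ⟨f, hf0, hf1, -⟩ := exists_continuous_zero_one_of_isClosed hV.isClosed_compl
    isClosed_singleton (disjoint_singleton_right.2 (not_not.2 hpV))
  have hfy : ∃ᶠ n in atTop, 1 / 2 < f (y n) :=
    hy.frequently <| continuousAt_const.eventually_lt f.continuous.continuousAt
      (by norm_num [hf1 (mem_singleton p)])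
  refine ⟨f, f.continuous, (hfy.and_eventually hxs).mono fun n ⟨hyn, hxn⟩ => ?_⟩
  rw [hf0 fun h => hxn (hVs h), abs_sub_comm]
  simpa using (le_abs_self _).trans' hyn.le

theorem exists_continuous_frequently_le_abs_sub_of_forall_not_mapClusterPt [T1Space X]
    [NormalSpace X] {x y : ℕ → X} (hx : ∀ p, ¬MapClusterPt p atTop x)
    (hy : ∀ p, ¬MapClusterPt p atTop y) (hxy : ∀ n, x n ≠ y n) :
    ∃ f : X → ℝ, Continuous f ∧ ∃ᶠ n in atTop, 1 / 2 ≤ |f (x n) - f (y n)| := by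
  rw [← locallyFinite_singleton_iff_forall_not_mapClusterPt] at hx hy
  have eventually_ne {z : ℕ → X} (hz : LocallyFinite fun n => ({z n} : Set X)) (a : X) :
      ∀ᶠ n in atTop, z n ≠ a := by
    obtain ⟨s, hs, hfin⟩ := hz a
    rw [← Nat.cofinite_eq_atTop, eventually_cofinite]
    exact hfin.subset fun n hn => ⟨z n, rfl, (not_ne_iff.1 hn).symm ▸ mem_of_mem_nhds hs⟩
  -- `subbasis_with_rel` for `atTop` extracts a subsequence along which no `x` value is
  -- a `y` value
  obtain ⟨φ, hφ, hφr, -⟩ := (hasAntitoneBasis_atTop (α := ℕ)).subbasis_with_rel fun m =>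
    (eventually_ne hy (x m)).and (eventually_ne hx (y m))
  have hdisj : Disjoint (range (x ∘ φ)) (range (y ∘ φ)) := by
    refine disjoint_left.2 ?_
    rintro _ ⟨i, rfl⟩ ⟨j, hij⟩
    rcases lt_trichotomy i j with h | rfl | h
    exacts [(hφr h).1 hij, hxy _ hij.symm, (hφr h).2 hij.symm]
  have isClosed_range {z : ℕ → X} (hz : LocallyFinite fun n => ({z n} : Set X)) :
      IsClosed (range (z ∘ φ)) := by
    rw [← iUnion_singleton_eq_range]
    exact (hz.comp_injective hφ.injective).isClosed_iUnion fun _ => isClosed_singleton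
  obtain ⟨f, hf0, hf1, -⟩ :=
    exists_continuous_zero_one_of_isClosed (isClosed_range hx) (isClosed_range hy) hdisj
  refine ⟨f, f.continuous, frequently_atTop.2 fun N => ⟨φ N, hφ.id_le N, ?_⟩⟩
  rw [show f (x (φ N)) = 0 from hf0 (mem_range_self N),
    show f (y (φ N)) = 1 from hf1 (mem_range_self N)]
  norm_num

theorem exists_continuous_frequently_le_abs_sub [T1Space X] [NormalSpace X] {x y : ℕ → X}
    (hx : ∀ p, ¬MapClusterPt p atTop x) (hxy : ∀ n, x n ≠ y n) :
    ∃ f : X → ℝ, Continuous f ∧ ∃ᶠ n in atTop, 1 / 2 ≤ |f (x n) - f (y n)| := by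
  by_cases hy : ∃ p, MapClusterPt p atTop y
  · obtain ⟨p, hp⟩ := hy
    exact exists_continuous_frequently_le_abs_sub_of_mapClusterPt (hx p) hp
  · exact exists_continuous_frequently_le_abs_sub_of_forall_not_mapClusterPt hx
      (not_exists.1 hy) hxy

end ClusterPoints

section QuasiMetric

variable {X : Type*} {d : X → X → ℝ}

theorem IsQuasiMetric.forwardBall_subset (hd : IsQuasiMetric d) {p q : X} {r δ : ℝ}
    (h : d p q + r ≤ δ) : {y | d q y < r} ⊆ {y | d p y < δ} := fun y hy => by
  have := hd.triangle p y q
  change d q y < r at hy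
  change d p y < δ
  linarith

theorem IsQuasiMetric.isTopologicalBasis_forwardBalls (hd : IsQuasiMetric d) :
    @TopologicalSpace.IsTopologicalBasis X (forwardTopology d)
      {S | ∃ x : X, ∃ ε : ℝ, 0 < ε ∧ S = {y | d x y < ε}} := by
  let := forwardTopology d
  refine ⟨?_, eq_univ_of_forall fun x => ⟨_, ⟨x, 1, one_pos, rfl⟩, by simp [hd.refl]⟩, rfl⟩
  rintro _ ⟨p, ε, -, rfl⟩ _ ⟨q, η, -, rfl⟩ x ⟨hpx, hqx⟩
  refine ⟨_, ⟨x, min (ε - d p x) (η - d q x), lt_min (sub_pos.2 hpx) (sub_pos.2 hqx), rfl⟩,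
    by simpa [hd.refl] using ⟨hpx, hqx⟩, subset_inter ?_ ?_⟩
  · exact hd.forwardBall_subset (by linarith [min_le_left (ε - d p x) (η - d q x)])
  · exact hd.forwardBall_subset (by linarith [min_le_right (ε - d p x) (η - d q x)])

theorem IsQuasiMetric.nhds_basis_forwardBall (hd : IsQuasiMetric d) (x : X) :
    (@nhds X (forwardTopology d) x).HasBasis (fun ε : ℝ => 0 < ε) fun ε => {y | d x y < ε} := by
  let := forwardTopology d
  refine hd.isTopologicalBasis_forwardBalls.nhds_hasBasis.to_hasBasis ?_
    fun ε hε => ⟨_, ⟨⟨x, ε, hε, rfl⟩, by simpa [hd.refl] using hε⟩, subset_rfl⟩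
  rintro _ ⟨⟨p, ε, -, rfl⟩, hpx⟩
  exact ⟨ε - d p x, sub_pos.2 hpx, hd.forwardBall_subset (by linarith)⟩

variable [TopologicalSpace X]

theorem forwardContinuous_of_continuous_s15
    (hb : ∀ x, (𝓝 x).HasBasis (fun ε : ℝ => 0 < ε) fun ε => {y | d x y < ε})
    {f : X → ℝ} (hf : Continuous f) :
    ForwardContinuous d f := fun x ε hε => by
  obtain ⟨δ, hδ, h⟩ := ((hb x).tendsto_iff Metric.nhds_basis_ball).1 (hf.tendsto x) ε hε
  exact ⟨δ, hδ, fun y hy => by simpa [Real.dist_eq, abs_sub_comm] using h y hy⟩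

theorem forall_not_mapClusterPt_of_not_forwardBall_subset
    (hb : ∀ x, (𝓝 x).HasBasis (fun ε : ℝ => 0 < ε) fun ε => {y | d x y < ε})
    (hd : IsQuasiMetric d) {𝒰 : Set (Set X)} (hopen : ∀ U ∈ 𝒰, IsOpen U) (hcov : ⋃₀ 𝒰 = univ)
    {x : ℕ → X} {r : ℕ → ℝ} (hr : Tendsto r atTop (𝓝 0))
    (hx : ∀ n, ∀ U ∈ 𝒰, ¬{y | d (x n) y < r n} ⊆ U) (p : X) : ¬MapClusterPt p atTop x := fun hp => by
  obtain ⟨U, hU, hpU⟩ := mem_sUnion.1 (hcov ▸ mem_univ p)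
  obtain ⟨δ, hδ, hball⟩ := (hb p).mem_iff.1 ((hopen U hU).mem_nhds hpU)
  obtain ⟨n, hpx, hrn⟩ := ((mapClusterPt_iff_frequently.1 hp _ ((hb p).mem_of_mem
    (half_pos hδ))).and_eventually (hr.eventually (gt_mem_nhds (half_pos hδ)))).exists
  have hpx : d p (x n) < δ / 2 := hpx
  exact hx n U hU ((hd.forwardBall_subset (by linarith)).trans hball)

theorem IsUC.exists_lebesgue_number [T1Space X] [NormalSpace X]
    (hb : ∀ x, (𝓝 x).HasBasis (fun ε : ℝ => 0 < ε) fun ε => {y | d x y < ε})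
    (hd : IsQuasiMetric d) (hUC : IsUC d) {𝒰 : Set (Set X)} (hopen : ∀ U ∈ 𝒰, IsOpen U)
    (hcov : ⋃₀ 𝒰 = univ) :
    ∃ δ > (0 : ℝ), ∀ x : X, ∃ U ∈ 𝒰, {y : X | d x y < δ} ⊆ U := by
  by_contra! hno
  choose x hx using fun n : ℕ => hno (1 / (n + 1)) Nat.one_div_pos_of_nat
  have hxy : ∀ n, ∃ y, d (x n) y < 1 / (n + 1) ∧ x n ≠ y := fun n => by
    obtain ⟨U, hU, hxU⟩ := mem_sUnion.1 (hcov ▸ mem_univ (x n))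
    obtain ⟨y, hy, hyU⟩ := not_subset.1 (hx n U hU)
    exact ⟨y, hy, fun h => hyU (h ▸ hxU)⟩
  choose y hd_lt hne using hxy
  have hr : Tendsto (fun n : ℕ => 1 / ((n : ℝ) + 1)) atTop (𝓝 0) :=
    tendsto_one_div_add_atTop_nhds_zero_nat
  have hpar : ForwardParallel d x y := fun ε hε => eventually_atTop.1 <|
    (hr.eventually (gt_mem_nhds hε)).mono fun n hn => (hd_lt n).trans hn
  obtain ⟨f, hf, hfreq⟩ := exists_continuous_frequently_le_abs_sub
    (forall_not_mapClusterPt_of_not_forwardBall_subset hb hd hopen hcov hr hx) hne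
  obtain ⟨δ, hδ, hfδ⟩ := hUC f (forwardContinuous_of_continuous_s15 hb hf) (1 / 2) one_half_pos
  obtain ⟨n, hn, hsmall⟩ := (hfreq.and_eventually (eventually_atTop.2 (hpar δ hδ))).exists
  exact (hfδ _ _ hsmall).not_ge hn

end QuasiMetric

/-- a T₁, normal, UC quasi-metric space has the Lebesgue number property. -/
theorem lebesgue_of_isUC {X : Type*} (d : X → X → ℝ) (hd : IsQuasiMetric d)
    (hT1 : @T1Space X (forwardTopology d))
    (hN : @NormalSpace X (forwardTopology d))
    (hUC : IsUC d) :
    ∀ 𝒰 : Set (Set X), (∀ U ∈ 𝒰, (forwardTopology d).IsOpen U) →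
      ⋃₀ 𝒰 = Set.univ →
      ∃ δ > (0:ℝ), ∀ x : X, ∃ U ∈ 𝒰, {y : X | d x y < δ} ⊆ U := by
  let := forwardTopology d
  exact fun _ => hUC.exists_lebesgue_number hd.nhds_basis_forwardBall hd
end

section
/- Let X be a quasi-metrizable topological space whose set X' of non-isolated points is compact and nonempty, with compatible quasi-metric d. Define ρ(x,y) = 0 if x=y and ρ(x,y) = d(x,y) + max{d(X',x), d(X',y)} if x≠y, where d(X',x) = inf{d(t,x): t∈X'}. Then ρ is a quasi-metric on X that induces the same (forward) topology as d. -/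
open Filter Topology Set

/-!
Since `d ≤ ρ`, every `d`-ball contains the `ρ`-ball with the same centre and radius, so the
`ρ`-topology is finer. Conversely, at a non-isolated point `y` we have `d(X', y) = 0`, and the
triangle inequality gives `d(X', z) ≤ d(y, z)`, so `ρ(y, z) ≤ 2 d(y, z)`; an isolated point
`y` has a `d`-ball reduced to `{y}`, on which `ρ(y, ·)` vanishes. Either way small `d`-balls
sit inside small `ρ`-balls.
-/

namespace IsQuasiMetric

variable {X : Type*} {d : X → X → ℝ}

theorem isOpen_forwardTopology_iff (hd : IsQuasiMetric d) {U : Set X} :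
    IsOpen[forwardTopology d] U ↔ ∀ x ∈ U, ∃ ε > (0 : ℝ), ∀ y, d x y < ε → y ∈ U := by
  constructor
  · intro hU
    induction hU with
    | basic S hS =>
      obtain ⟨z, ε, -, rfl⟩ := hS
      intro x hx
      refine ⟨ε - d z x, sub_pos.2 hx, fun y hy => ?_⟩
      have := hd.triangle z y x
      show d z y < ε
      linarith
    | univ => exact fun _ _ => ⟨1, one_pos, fun _ _ => trivial⟩
    | inter S₁ S₂ _ _ ih₁ ih₂ =>
      intro x hx
      obtain ⟨ε₁, hε₁, h₁⟩ := ih₁ x hx.1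
      obtain ⟨ε₂, hε₂, h₂⟩ := ih₂ x hx.2
      exact ⟨min ε₁ ε₂, lt_min hε₁ hε₂, fun y hy =>
        ⟨h₁ y (hy.trans_le (min_le_left _ _)), h₂ y (hy.trans_le (min_le_right _ _))⟩⟩
    | sUnion S _ ih =>
      rintro x ⟨s, hs, hxs⟩
      obtain ⟨ε, hε, h⟩ := ih s hs x hxs
      exact ⟨ε, hε, fun y hy => ⟨s, hs, h y hy⟩⟩
  · intro h
    choose ε hε hsub using h
    have hU : U = ⋃ x : U, {y | d x y < ε x x.2} := by
      ext y
      refine ⟨fun hy => mem_iUnion.2 ⟨⟨y, hy⟩, by simpa [hd.refl y] using hε y hy⟩, fun hy => ?_⟩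
      obtain ⟨x, hx⟩ := mem_iUnion.1 hy
      exact hsub x x.2 y hx
    rw [hU]
    exact @isOpen_iUnion _ _ (forwardTopology d) _ fun x =>
      TopologicalSpace.isOpen_generateFrom_of_mem ⟨x, ε x x.2, hε x x.2, rfl⟩

theorem forwardTopology_le {d₁ d₂ : X → X → ℝ} (hd₁ : IsQuasiMetric d₁)
    (hd₂ : IsQuasiMetric d₂)
    (h : ∀ x, ∀ ε > (0 : ℝ), ∃ δ > (0 : ℝ), ∀ y, d₂ x y < δ → d₁ x y < ε) :
    forwardTopology d₂ ≤ forwardTopology d₁ := by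
  refine TopologicalSpace.le_generateFrom_iff_subset_isOpen.2 ?_
  rintro S ⟨x, ε, -, rfl⟩
  refine hd₂.isOpen_forwardTopology_iff.2 fun y hy => ?_
  obtain ⟨δ, hδ, hball⟩ := h y (ε - d₁ x y) (sub_pos.2 hy)
  refine ⟨δ, hδ, fun z hz => ?_⟩
  have := hd₁.triangle x z y
  have := hball z hz
  show d₁ x z < ε
  linarith

end IsQuasiMetric

theorem max_le_max_add_max {a b c : ℝ} (hc : 0 ≤ c) : max a b ≤ max a c + max c b :=
  max_le (by linarith [le_max_left a c, le_max_left c b])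
    (by linarith [le_max_right c b, le_max_right a c])

section Beer

variable {X : Type*} {d : X → X → ℝ} {A : Set X}

noncomputable def quasiInfDist (d : X → X → ℝ) (A : Set X) (x : X) : ℝ :=
  sInf ((fun t => d t x) '' A)

noncomputable def beerDist [DecidableEq X] (d : X → X → ℝ) (A : Set X) (x y : X) : ℝ :=
  if x = y then 0 else d x y + max (quasiInfDist d A x) (quasiInfDist d A y)

@[simp]
theorem beerDist_self [DecidableEq X] (x : X) : beerDist d A x x = 0 := if_pos rfl

namespace IsQuasiMetric

theorem quasiInfDist_nonneg (hd : IsQuasiMetric d) (x : X) : 0 ≤ quasiInfDist d A x :=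
  Real.sInf_nonneg <| by
    rintro r ⟨t, -, rfl⟩
    exact hd.nonneg t x

theorem quasiInfDist_le (hd : IsQuasiMetric d) {t : X} (ht : t ∈ A) (x : X) :
    quasiInfDist d A x ≤ d t x :=
  csInf_le ⟨0, by rintro r ⟨s, -, rfl⟩; exact hd.nonneg s x⟩ ⟨t, ht, rfl⟩

theorem quasiInfDist_eq_zero_of_mem (hd : IsQuasiMetric d) {x : X} (hx : x ∈ A) :
    quasiInfDist d A x = 0 :=
  le_antisymm ((hd.quasiInfDist_le hx x).trans_eq (hd.refl x)) (hd.quasiInfDist_nonneg x)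

theorem quasiInfDist_le_add (hd : IsQuasiMetric d) (x y : X) :
    quasiInfDist d A y ≤ quasiInfDist d A x + d x y := by
  rcases A.eq_empty_or_nonempty with rfl | hA
  · simp [quasiInfDist, hd.nonneg]
  rw [← sub_le_iff_le_add]
  refine le_csInf (hA.image _) ?_
  rintro r ⟨t, ht, rfl⟩
  have := hd.quasiInfDist_le ht y
  have := hd.triangle t y x
  linarith

variable [DecidableEq X]

theorem le_beerDist (hd : IsQuasiMetric d) (x y : X) : d x y ≤ beerDist d A x y := by
  unfold beerDist
  split_ifs with h
  · rw [h, hd.refl]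
  · have := (hd.quasiInfDist_nonneg (A := A) x).trans (le_max_left _ (quasiInfDist d A y))
    linarith

theorem beerDist_nonneg (hd : IsQuasiMetric d) (x y : X) : 0 ≤ beerDist d A x y :=
  (hd.nonneg x y).trans (hd.le_beerDist x y)

theorem beerDist_le_two_mul (hd : IsQuasiMetric d) {y : X} (hy : y ∈ A) (z : X) :
    beerDist d A y z ≤ 2 * d y z := by
  unfold beerDist
  split_ifs with h
  · rw [h, hd.refl, mul_zero]
  · have := hd.quasiInfDist_le_add (A := A) y z
    rw [hd.quasiInfDist_eq_zero_of_mem hy] at this ⊢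
    have := max_le (hd.nonneg y z) (by linarith : quasiInfDist d A z ≤ d y z)
    linarith

theorem beerDist (hd : IsQuasiMetric d) : IsQuasiMetric (_root_.beerDist d A) where
  nonneg := hd.beerDist_nonneg
  refl := beerDist_self
  eq_of_both_zero x y hxy hyx := hd.eq_of_both_zero x y
    (le_antisymm (hxy ▸ hd.le_beerDist x y) (hd.nonneg x y))
    (le_antisymm (hyx ▸ hd.le_beerDist y x) (hd.nonneg y x))
  triangle x y z := by
    by_cases hxy : x = y
    · rw [hxy, beerDist_self]
      exact add_nonneg (hd.beerDist_nonneg y z) (hd.beerDist_nonneg z y)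
    by_cases hxz : x = z
    · rw [hxz, beerDist_self, zero_add]
    by_cases hzy : z = y
    · rw [hzy, beerDist_self, add_zero]
    simp only [_root_.beerDist, if_neg hxy, if_neg hxz, if_neg hzy]
    have := hd.triangle x y z
    have := max_le_max_add_max (a := quasiInfDist d A x) (b := quasiInfDist d A y)
      (hd.quasiInfDist_nonneg (A := A) z)
    linarith

theorem forwardTopology_beerDist (hd : IsQuasiMetric d)
    (hA : ∀ y ∉ A, IsOpen[forwardTopology d] {y}) :
    forwardTopology (_root_.beerDist d A) = forwardTopology d := by
  refine le_antisymm
    (forwardTopology_le hd hd.beerDist fun x ε hε =>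
      ⟨ε, hε, fun y hy => (hd.le_beerDist x y).trans_lt hy⟩)
    (forwardTopology_le hd.beerDist hd fun y ε hε => ?_)
  by_cases hy : y ∈ A
  · exact ⟨ε / 2, half_pos hε, fun z hz => (hd.beerDist_le_two_mul hy z).trans_lt (by linarith)⟩
  · obtain ⟨δ, hδ, hball⟩ := hd.isOpen_forwardTopology_iff.1 (hA y hy) y rfl
    exact ⟨δ, hδ, fun z hz => by rw [mem_singleton_iff.1 (hball z hz), beerDist_self]; exact hε⟩

end IsQuasiMetric

end Beer

theorem beer_quasiMetric_general {X : Type*} [DecidableEq X] [T : TopologicalSpace X] (d : X → X → ℝ)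
    (hd : IsQuasiMetric d) (hcompat : forwardTopology d = T)
    (X' : Set X) (hX' : X' = {x : X | ¬ IsOpen ({x} : Set X)})
    (ρ : X → X → ℝ)
    (hρ : ∀ x y : X, ρ x y = if x = y then 0 else
      d x y + max (sInf ((fun t => d t x) '' X')) (sInf ((fun t => d t y) '' X'))) :
    IsQuasiMetric ρ ∧ forwardTopology ρ = forwardTopology d := by
  obtain rfl : ρ = beerDist d X' := funext₂ hρ
  refine ⟨hd.beerDist, hd.forwardTopology_beerDist fun y hy => ?_⟩
  rw [hcompat]
  simpa [hX'] using hy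

/-- the Beer-type quasi-metric `ρ` built from a compatible quasi-metric `d`
and the compact set of non-isolated points is a quasi-metric inducing the same topology. -/
theorem beer_quasiMetric {X : Type*} [DecidableEq X] [T : TopologicalSpace X] (d : X → X → ℝ)
    (hd : IsQuasiMetric d) (hcompat : forwardTopology d = T)
    (X' : Set X) (hX' : X' = {x : X | ¬ IsOpen ({x} : Set X)})
    (hcpt : IsCompact X') (hne : X'.Nonempty)
    (ρ : X → X → ℝ)
    (hρ : ∀ x y : X, ρ x y = if x = y then 0 else
      d x y + max (sInf ((fun t => d t x) '' X')) (sInf ((fun t => d t y) '' X'))) :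
    IsQuasiMetric ρ ∧ forwardTopology ρ = forwardTopology d :=
  beer_quasiMetric_general (T := T) d hd hcompat X' hX' ρ hρ
end
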